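/- (Theorem 3, summability of the step lengths.) Let F : ℝ^n → ℝ be differentiable, G an m×n real matrix, g ∈ ℝ^m, α, β, ε, ω > 0, P an n×n real matrix, and suppose J_ε(x) = F(x) + β ψ_ε(Gx − g) is bounded below on ℝ^n. Let (x^k)_{k≥0} be a sequence in ℝ^n such that for every k ≥ k₀: (i) x^{k+1} satisfies α P (x^{k+1} − x^k) + ∇F(x^k) + β Gᵗ X_k (G x^{k+1} − g) = 0, where X_k is the diagonal matrix with [X_k]_{jj} = 1/max(ε, (Gx^k − g)_j) if (Gx^k − g)_j ≥ 0 and 0 otherwise; (ii) α⟨P(x^{k+1}−x^k), x^{k+1}−x^k⟩ − (F(x^{k+1}) − F(x^k) − ⟨∇F(x^k), x^{k+1}−x^k⟩) ≥ ω‖x^{k+1}−x^k‖²; (iii) (Gx^k − g)_i < 0 implies (Gx^{k+1} − g)_i ≤ 0 for every i. Then the sequence (J_ε(x^k))_{k≥k₀} is monotonically decreasing and Σ_{k≥k₀} ‖x^{k+1} − x^k‖² < ∞. -/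

import Mathlib

/-!
For `a ≥ 0` and `M = max ε a`, the parabola `s ↦ s²/(2M) + M/2` lies above `φ_ε` and touches it
at `a`; by convexity its increment from `a` to `b` is at most `b (b - a) / M`. Where `a < 0`,
condition (iii) keeps `φ_ε` constant at `ε/2`. Hence `ψ_ε(b) - ψ_ε(a) ≤ ⟨X b, b - a⟩`, with
`a = Gx^k - g`, `b = Gx^{k+1} - g` and `X = X_k`. Pairing the update equation (i) with the step
`d = x^{k+1} - x^k` and using (ii) gives `J_ε(x^{k+1}) + ω‖d‖² ≤ J_ε(x^k)`; telescoping against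
the lower bound of `J_ε` makes `Σ ‖d‖²` summable.
-/

open Matrix

/-- The regularization `φ_ε` of `s ↦ max 0 s`. -/
noncomputable def phiEps (ε s : ℝ) : ℝ :=
  if s ≤ 0 then ε / 2 else if s ≤ ε then s ^ 2 / (2 * ε) + ε / 2 else s

/-- `ψ_ε(y) = Σ_i φ_ε(y_i)`. -/
noncomputable def psiEps (ε : ℝ) {m : ℕ} (y : Fin m → ℝ) : ℝ := ∑ i, phiEps ε (y i)

-- The diagonal entries of `X_k`: `[X_k]_jj = phiWeight ε (Gx^k - g)_j`.
noncomputable def phiWeight (ε a : ℝ) : ℝ := if 0 ≤ a then 1 / max ε a else 0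

lemma phiEps_le_of_le {ε M : ℝ} (hε : 0 < ε) (hM : ε ≤ M) (s : ℝ) :
    phiEps ε s ≤ s ^ 2 / (2 * M) + M / 2 := by
  have hM0 : 0 < M := hε.trans_le hM
  unfold phiEps
  split_ifs with hs₀ hsε
  · have : 0 ≤ s ^ 2 / (2 * M) := by positivity
    linarith
  · rw [not_le] at hs₀
    rw [div_add' _ _ _ (by positivity), div_add' _ _ _ (by positivity),
      div_le_div_iff₀ (by positivity) (by positivity)]
    have hs2 : s ^ 2 ≤ ε * M := by nlinarith
    nlinarith [mul_nonneg (sub_nonneg.2 hM) (sub_nonneg.2 hs2)]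
  · have : s ^ 2 / (2 * M) + M / 2 - s = (s - M) ^ 2 / (2 * M) := by
      field_simp; ring
    have : 0 ≤ (s - M) ^ 2 / (2 * M) := by positivity
    linarith

lemma phiEps_eq_of_nonneg {ε a : ℝ} (hε : 0 < ε) (ha : 0 ≤ a) :
    phiEps ε a = a ^ 2 / (2 * max ε a) + max ε a / 2 := by
  unfold phiEps
  rcases le_or_gt a ε with haε | hεa
  · rw [max_eq_left haε]
    split_ifs with ha₀
    · simp [le_antisymm ha₀ ha]
    · rfl
  · have ha₀ : a ≠ 0 := (hε.trans hεa).ne'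
    rw [max_eq_right hεa.le, if_neg (by linarith), if_neg (by linarith)]
    field_simp
    ring

lemma phiEps_sub_le_of_nonneg {ε a b : ℝ} (hε : 0 < ε) (ha : 0 ≤ a) :
    phiEps ε b - phiEps ε a ≤ 1 / max ε a * b * (b - a) := by
  set M := max ε a
  have hM0 : 0 < M := hε.trans_le (le_max_left _ _)
  have hparabola : b ^ 2 / (2 * M) - a ^ 2 / (2 * M) ≤ 1 / M * b * (b - a) := by
    rw [div_sub_div_same, div_le_iff₀ (by positivity)]
    have : 1 / M * b * (b - a) * (2 * M) = 2 * (b * (b - a)) := by field_simp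
    nlinarith [sq_nonneg (b - a)]
  linarith [phiEps_le_of_le hε (le_max_left ε a) b, phiEps_eq_of_nonneg hε ha]

lemma phiEps_sub_le_phiWeight {ε a b : ℝ} (hε : 0 < ε) (hab : a < 0 → b ≤ 0) :
    phiEps ε b - phiEps ε a ≤ phiWeight ε a * b * (b - a) := by
  unfold phiWeight
  split_ifs with ha
  · exact phiEps_sub_le_of_nonneg hε ha
  · rw [not_le] at ha
    simp [phiEps, hab ha, ha.le]

lemma psiEps_sub_le {ε : ℝ} {m : ℕ} (hε : 0 < ε) {a b : Fin m → ℝ}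
    (hab : ∀ i, a i < 0 → b i ≤ 0) :
    psiEps ε b - psiEps ε a ≤ (diagonal (fun j => phiWeight ε (a j)) *ᵥ b) ⬝ᵥ (b - a) := by
  simp only [psiEps, dotProduct, mulVec_diagonal, Pi.sub_apply, ← Finset.sum_sub_distrib]
  exact Finset.sum_le_sum fun i _ => phiEps_sub_le_phiWeight hε (hab i)

lemma add_psiEps_step_le {ι : Type*} [Fintype ι] {m : ℕ} {F : (ι → ℝ) → ℝ}
    {G : Matrix (Fin m) ι ℝ} {g : Fin m → ℝ} {α β ε ω : ℝ} (hβ : 0 < β) (hε : 0 < ε)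
    {P : Matrix ι ι ℝ} {x x' v : ι → ℝ}
    (hupdate : α • P *ᵥ (x' - x) + v +
        β • Gᵀ *ᵥ (diagonal (fun j => phiWeight ε ((G *ᵥ x - g) j)) *ᵥ (G *ᵥ x' - g)) = 0)
    (hR : α * (P *ᵥ (x' - x) ⬝ᵥ (x' - x)) - (F x' - F x - v ⬝ᵥ (x' - x))
        ≥ ω * ((x' - x) ⬝ᵥ (x' - x)))
    (hI : ∀ i, (G *ᵥ x - g) i < 0 → (G *ᵥ x' - g) i ≤ 0) :
    F x' + β * psiEps ε (G *ᵥ x' - g) + ω * ((x' - x) ⬝ᵥ (x' - x))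
      ≤ F x + β * psiEps ε (G *ᵥ x - g) := by
  set W := diagonal fun j => phiWeight ε ((G *ᵥ x - g) j)
  have hGd : G *ᵥ (x' - x) = (G *ᵥ x' - g) - (G *ᵥ x - g) := by
    rw [mulVec_sub]; abel
  have hpaired : α * (P *ᵥ (x' - x) ⬝ᵥ (x' - x)) + v ⬝ᵥ (x' - x)
      + β * ((W *ᵥ (G *ᵥ x' - g)) ⬝ᵥ ((G *ᵥ x' - g) - (G *ᵥ x - g))) = 0 := by
    have h := congrArg (· ⬝ᵥ (x' - x)) hupdate
    simp only [add_dotProduct, smul_dotProduct, zero_dotProduct, smul_eq_mul, mulVec_transpose,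
      ← dotProduct_mulVec, hGd] at h
    exact h
  have hpsi := mul_le_mul_of_nonneg_left (psiEps_sub_le hε hI) hβ.le
  linarith

lemma summable_of_descent {u s : ℕ → ℝ} {C ω : ℝ} {k₀ : ℕ} (hω : 0 < ω)
    (hs : ∀ k, 0 ≤ s k) (hC : ∀ k, C ≤ u k) (hdescent : ∀ k, k₀ ≤ k → u (k + 1) + ω * s k ≤ u k) :
    Summable s := by
  rw [← summable_nat_add_iff k₀]
  refine summable_of_sum_range_le (c := (u k₀ - C) / ω) (fun k => hs _) fun N => ?_
  have htelescope : ∑ i ∈ Finset.range N, ω * s (i + k₀) ≤ u k₀ - u (N + k₀) := by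
    calc ∑ i ∈ Finset.range N, ω * s (i + k₀)
        ≤ ∑ i ∈ Finset.range N, (u (i + k₀) - u (i + 1 + k₀)) := Finset.sum_le_sum fun i _ => by
          have := hdescent (i + k₀) (Nat.le_add_left _ _)
          rw [Nat.add_right_comm]; linarith
      _ = u k₀ - u (N + k₀) := by
          simpa using Finset.sum_range_sub' (fun i => u (i + k₀)) N
  rw [le_div_iff₀ hω, mul_comm, Finset.mul_sum]
  linarith [hC (N + k₀)]

theorem stmt11_general {n m : ℕ} (F : (Fin n → ℝ) → ℝ)
    (G : Matrix (Fin m) (Fin n) ℝ) (g : Fin m → ℝ)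
    (α β ε ω : ℝ) (hβ : 0 < β) (hε : 0 < ε) (hω : 0 < ω)
    (P : Matrix (Fin n) (Fin n) ℝ)
    (hbdd : ∃ C : ℝ, ∀ y : Fin n → ℝ, C ≤ F y + β * psiEps ε (G.mulVec y - g))
    (x : ℕ → Fin n → ℝ) (k₀ : ℕ)
    (Fgrad : (Fin n → ℝ) → (Fin n → ℝ))
    (hupdate : ∀ k, k₀ ≤ k →
      α • P.mulVec (x (k + 1) - x k) + Fgrad (x k) +
        β • Gᵀ.mulVec
          ((Matrix.diagonal fun j =>
              if 0 ≤ (G.mulVec (x k) - g) j then 1 / max ε ((G.mulVec (x k) - g) j)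
              else 0).mulVec (G.mulVec (x (k + 1)) - g)) = 0)
    (hR : ∀ k, k₀ ≤ k →
      α * (P.mulVec (x (k + 1) - x k) ⬝ᵥ (x (k + 1) - x k)) -
          (F (x (k + 1)) - F (x k) - Fgrad (x k) ⬝ᵥ (x (k + 1) - x k))
        ≥ ω * ((x (k + 1) - x k) ⬝ᵥ (x (k + 1) - x k)))
    (hI : ∀ k, k₀ ≤ k → ∀ i,
      (G.mulVec (x k) - g) i < 0 → (G.mulVec (x (k + 1)) - g) i ≤ 0) :
    (∀ k, k₀ ≤ k →
      F (x (k + 1)) + β * psiEps ε (G.mulVec (x (k + 1)) - g)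
        ≤ F (x k) + β * psiEps ε (G.mulVec (x k) - g)) ∧
    Summable (fun k : ℕ => (x (k + 1) - x k) ⬝ᵥ (x (k + 1) - x k)) := by
  have hstep k (hk : k₀ ≤ k) := add_psiEps_step_le hβ hε (hupdate k hk) (hR k hk) (hI k hk)
  have hsq_nonneg k : 0 ≤ (x (k + 1) - x k) ⬝ᵥ (x (k + 1) - x k) :=
    Finset.sum_nonneg fun i _ => mul_self_nonneg _
  obtain ⟨C, hC⟩ := hbdd
  refine ⟨fun k hk => ?_, summable_of_descent hω hsq_nonneg (fun k => hC (x k)) hstep⟩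
  nlinarith [hstep k hk, hsq_nonneg k]

/-- Theorem 3: monotone decrease of `J_ε` and summability of the squared step
lengths.  Here `v ⬝ᵥ v = ‖v‖²` is the squared Euclidean norm. -/
theorem stmt11 {n m : ℕ} (F : (Fin n → ℝ) → ℝ) (hF : Differentiable ℝ F)
    (G : Matrix (Fin m) (Fin n) ℝ) (g : Fin m → ℝ)
    (α β ε ω : ℝ) (hα : 0 < α) (hβ : 0 < β) (hε : 0 < ε) (hω : 0 < ω)
    (P : Matrix (Fin n) (Fin n) ℝ)
    (hbdd : ∃ C : ℝ, ∀ y : Fin n → ℝ, C ≤ F y + β * psiEps ε (G.mulVec y - g))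
    (x : ℕ → Fin n → ℝ) (k₀ : ℕ)
    (Fgrad : (Fin n → ℝ) → (Fin n → ℝ))
    (hgrad : ∀ y : Fin n → ℝ, ∀ v : Fin n → ℝ, fderiv ℝ F y v = Fgrad y ⬝ᵥ v)
    (hupdate : ∀ k, k₀ ≤ k →
      α • P.mulVec (x (k + 1) - x k) + Fgrad (x k) +
        β • Gᵀ.mulVec
          ((Matrix.diagonal fun j =>
              if 0 ≤ (G.mulVec (x k) - g) j then 1 / max ε ((G.mulVec (x k) - g) j)
              else 0).mulVec (G.mulVec (x (k + 1)) - g)) = 0)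
    (hR : ∀ k, k₀ ≤ k →
      α * (P.mulVec (x (k + 1) - x k) ⬝ᵥ (x (k + 1) - x k)) -
          (F (x (k + 1)) - F (x k) - Fgrad (x k) ⬝ᵥ (x (k + 1) - x k))
        ≥ ω * ((x (k + 1) - x k) ⬝ᵥ (x (k + 1) - x k)))
    (hI : ∀ k, k₀ ≤ k → ∀ i,
      (G.mulVec (x k) - g) i < 0 → (G.mulVec (x (k + 1)) - g) i ≤ 0) :
    (∀ k, k₀ ≤ k →
      F (x (k + 1)) + β * psiEps ε (G.mulVec (x (k + 1)) - g)
        ≤ F (x k) + β * psiEps ε (G.mulVec (x k) - g)) ∧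
    Summable (fun k : ℕ => (x (k + 1) - x k) ⬝ᵥ (x (k + 1) - x k)) :=
  stmt11_general F G g α β ε ω hβ hε hω P hbdd x k₀ Fgrad hupdate hR hI
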